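/- Let A and B be positive bounded linear operators on L²(X, μ). Then ‖A + B*‖ ≥ 2·√( r(A B) ). -/

import Mathlib

open MeasureTheory
open scoped ENNReal ComplexOrder

noncomputable section

/-- `K` is a positive kernel operator on `L²(X, μ)`: there is a nonnegative measurable
kernel `k` on `X × X` such that for every `f ∈ L²` and almost every `x`,
`∫ k(x,y)|f(y)| dμ(y) < ∞` and `(K f)(x) = ∫ k(x,y) f(y) dμ(y)`. -/
def IsPosKernelOp {X : Type*} [MeasurableSpace X] (μ : Measure X)
    (K : Lp ℂ 2 μ →L[ℂ] Lp ℂ 2 μ) : Prop :=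
  ∃ k : X → X → ℝ, Measurable (Function.uncurry k) ∧ (∀ x y, 0 ≤ k x y) ∧
    ∀ f : Lp ℂ 2 μ,
      (∀ᵐ x ∂μ, Integrable (fun y => k x y * ‖(f : X → ℂ) y‖) μ) ∧
      (∀ᵐ x ∂μ, (K f : X → ℂ) x = ∫ y, (k x y : ℂ) * (f : X → ℂ) y ∂μ)

/-- `D` is the operator of multiplication by the (real-valued) function `d`. -/
def IsMulOp {X : Type*} [MeasurableSpace X] (μ : Measure X) (d : X → ℝ)
    (D : Lp ℂ 2 μ →L[ℂ] Lp ℂ 2 μ) : Prop :=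
  ∀ f : Lp ℂ 2 μ, (D f : X → ℂ) =ᵐ[μ] fun x => (d x : ℂ) * (f : X → ℂ) x

/-- A bounded operator on `L²(X, μ)` is positive if it maps a.e. nonnegative functions to
a.e. nonnegative functions (`0 ≤ z` in the complex order means `z` is real and `z ≥ 0`). -/
def IsPositiveOp {X : Type*} [MeasurableSpace X] (μ : Measure X)
    (A : Lp ℂ 2 μ →L[ℂ] Lp ℂ 2 μ) : Prop :=
  ∀ f : Lp ℂ 2 μ, (∀ᵐ x ∂μ, 0 ≤ (f : X → ℂ) x) → (∀ᵐ x ∂μ, 0 ≤ (A f : X → ℂ) x)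

open scoped Classical in
/-- `exp (∫ F dμ)` with the convention `exp (-∞) = 0`: for the integrands appearing below the
positive part is always integrable, so non-integrability means the integral is `-∞`. -/
def expInt {X : Type*} [MeasurableSpace X] (μ : Measure X) (F : X → ℝ) : ℝ :=
  if Integrable F μ then Real.exp (∫ x, F x ∂μ) else 0

/-- The numerical radius `w(A) = sup { |⟨A f, f⟩| : ‖f‖₂ = 1 }`. -/
def numRad {X : Type*} [MeasurableSpace X] (μ : Measure X)
    (A : Lp ℂ 2 μ →L[ℂ] Lp ℂ 2 μ) : ℝ :=
  sSup {r : ℝ | ∃ f : Lp ℂ 2 μ, ‖f‖ = 1 ∧ r = ‖(inner ℂ (A f) f : ℂ)‖}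

/-!
A positive operator on `L²` satisfies `|A φ| ≤ A |φ|` pointwise, hence
`|⟪A g, f⟫| + |⟪B f, g⟫| ≤ Re ⟪(A + B*) |g|, |f|⟫ ≤ ‖A + B*‖ ‖f‖ ‖g‖`.
By AM-GM the block operator `M = !![0, A; B, 0]` on `L² ⊕ L²` then has numerical radius at most
`‖A + B*‖ / 2`, which bounds its spectrum. Since `M² = !![AB, 0; 0, BA]`, every `λ ∈ σ(AB)` is
the square of a point of `σ(M)`, so `|λ| ≤ (‖A + B*‖ / 2)²`.
-/

open scoped InnerProductSpace

namespace ContinuousLinearMap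

section Spectrum

variable {𝕜 : Type*} [RCLike 𝕜] {F : Type*} [NormedAddCommGroup F] [InnerProductSpace 𝕜 F]
  [CompleteSpace F]

theorem isUnit_of_mul_norm_sq_le_norm_inner_self (T : F →L[𝕜] F) {c : ℝ}
    (hc : 0 < c) (h : ∀ x, c * ‖x‖ ^ 2 ≤ ‖⟪T x, x⟫_𝕜‖) : IsUnit T := by
  have hbelow : ∀ x, ‖x‖ ≤ c⁻¹ * ‖T x‖ := fun x => by
    rw [inv_mul_eq_div, le_div_iff₀ hc]
    rcases (norm_nonneg x).eq_or_lt with hx | hx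
    · rw [← hx, zero_mul]; positivity
    · have := (h x).trans (norm_inner_le_norm (T x) x)
      nlinarith
  have hT : AntilipschitzWith ⟨c⁻¹, by positivity⟩ T := T.antilipschitz_of_bound hbelow
  have hclosed : IsClosed (T.range : Set F) := hT.isClosed_range T.uniformContinuous
  have horth : T.rangeᗮ = ⊥ := by
    refine (Submodule.eq_bot_iff _).2 fun x hx => ?_
    have hx0 := h x
    rw [hx (T x) (LinearMap.mem_range_self _ x), norm_zero] at hx0
    exact norm_eq_zero.1 (pow_eq_zero_iff two_ne_zero |>.1 <|
      le_antisymm (nonpos_of_mul_nonpos_right hx0 hc) (sq_nonneg _))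
  rw [isUnit_iff_bijective]
  refine ⟨hT.injective, LinearMap.range_eq_top.1 ?_⟩
  rw [← hclosed.submodule_topologicalClosure_eq, Submodule.topologicalClosure_eq_top_iff, horth]

theorem norm_le_of_mem_spectrum (T : F →L[𝕜] F) {w : ℝ}
    (hw : ∀ x, ‖⟪T x, x⟫_𝕜‖ ≤ w * ‖x‖ ^ 2) {k : 𝕜} (hk : k ∈ spectrum 𝕜 T) : ‖k‖ ≤ w := by
  by_contra! hwk
  refine spectrum.mem_iff.1 hk <| isUnit_of_mul_norm_sq_le_norm_inner_self _
    (sub_pos.2 hwk) fun x => ?_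
  have hinner : ⟪(algebraMap 𝕜 (F →L[𝕜] F) k - T) x, x⟫_𝕜
      = (starRingEnd 𝕜) k * (‖x‖ : 𝕜) ^ 2 - ⟪T x, x⟫_𝕜 := by
    rw [sub_apply, inner_sub_left, algebraMap_apply, inner_smul_left, inner_self_eq_norm_sq_to_K]
  calc (‖k‖ - w) * ‖x‖ ^ 2 ≤ ‖k‖ * ‖x‖ ^ 2 - ‖⟪T x, x⟫_𝕜‖ := by linarith [hw x]
    _ = ‖(starRingEnd 𝕜) k * (‖x‖ : 𝕜) ^ 2‖ - ‖⟪T x, x⟫_𝕜‖ := by simp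
    _ ≤ _ := hinner ▸ norm_sub_norm_le _ _

end Spectrum

section Intertwining

variable {𝕜 : Type*} [NontriviallyNormedField 𝕜] {E F : Type*} [NormedAddCommGroup E]
  [NormedSpace 𝕜 E] [NormedAddCommGroup F] [NormedSpace 𝕜 F]

theorem spectrum_subset_of_retract_intertwine (S : F →L[𝕜] F)
    (T : E →L[𝕜] E) (i : F →L[𝕜] E) (p : E →L[𝕜] F) (hpi : p ∘L i = .id 𝕜 F)
    (hi : T ∘L i = i ∘L S) (hp : p ∘L T = S ∘L p) : spectrum 𝕜 S ⊆ spectrum 𝕜 T := by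
  intro k hk
  rw [spectrum.mem_iff] at hk ⊢
  rintro ⟨u, hu⟩
  have hpi' (x : F) : p (i x) = x := congr($hpi x)
  have hTi (x : F) : T (i x) = i (S x) := congr($hi x)
  have hpT (x : E) : p (T x) = S (p x) := congr($hp x)
  have hi' (x : F) : i ((algebraMap 𝕜 _ k - S) x) = (u : E →L[𝕜] E) (i x) := by
    simp [hu, hTi]
  have hp' (x : E) : (algebraMap 𝕜 _ k - S) (p x) = p ((u : E →L[𝕜] E) x) := by
    simp [hu, hpT]
  refine hk ⟨⟨_, p ∘L ↑u⁻¹ ∘L i, ?_, ?_⟩, rfl⟩ <;> ext x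
  · simp only [mul_apply_eq_comp, comp_apply, one_apply_eq_self, hp']
    rw [← mul_apply_eq_comp, u.mul_inv, one_apply_eq_self, hpi']
  · simp only [mul_apply_eq_comp, comp_apply, one_apply_eq_self, hi']
    rw [← mul_apply_eq_comp, u.inv_mul, one_apply_eq_self, hpi']

end Intertwining

section OffDiag

variable {𝕜 : Type*} [RCLike 𝕜] {F : Type*} [NormedAddCommGroup F] [InnerProductSpace 𝕜 F]

/-- The block operator `!![0, A; B, 0]` on the Hilbert direct sum `F ⊕ F`. -/
def offDiag (A B : F →L[𝕜] F) : WithLp 2 (F × F) →L[𝕜] WithLp 2 (F × F) :=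
  let e := WithLp.prodContinuousLinearEquiv 2 𝕜 F F
  (e.symm : F × F →L[𝕜] _) ∘L A.prodMap B ∘L
    (ContinuousLinearEquiv.prodComm 𝕜 F F : F × F →L[𝕜] F × F) ∘L (e : _ →L[𝕜] F × F)

variable (A B : F →L[𝕜] F)

@[simp]
theorem offDiag_apply_fst (h : WithLp 2 (F × F)) : (offDiag A B h).fst = A h.snd := rfl

@[simp]
theorem offDiag_apply_snd (h : WithLp 2 (F × F)) : (offDiag A B h).snd = B h.fst := rfl

theorem norm_inner_offDiag_self_le {w : ℝ} (hw0 : 0 ≤ w)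
    (hw : ∀ f g, ‖⟪A g, f⟫_𝕜‖ + ‖⟪B f, g⟫_𝕜‖ ≤ w * (‖f‖ * ‖g‖)) (h : WithLp 2 (F × F)) :
    ‖⟪offDiag A B h, h⟫_𝕜‖ ≤ w / 2 * ‖h‖ ^ 2 := by
  have hinner : ⟪offDiag A B h, h⟫_𝕜 = ⟪A h.snd, h.fst⟫_𝕜 + ⟪B h.fst, h.snd⟫_𝕜 :=
    WithLp.prod_inner_apply _ _
  rw [hinner, WithLp.prod_norm_sq_eq_of_L2]
  calc _ ≤ w * (‖h.fst‖ * ‖h.snd‖) := (norm_add_le _ _).trans (hw _ _)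
    _ ≤ _ := by nlinarith [mul_nonneg hw0 (sq_nonneg (‖h.fst‖ - ‖h.snd‖))]

theorem spectrum_comp_subset_spectrum_offDiag_sq :
    spectrum 𝕜 (A ∘L B) ⊆ spectrum 𝕜 (offDiag A B ^ 2) := by
  let e := WithLp.prodContinuousLinearEquiv 2 𝕜 F F
  refine spectrum_subset_of_retract_intertwine _ _ ((e.symm : F × F →L[𝕜] _) ∘L inl 𝕜 F F)
    (fst 𝕜 F F ∘L (e : _ →L[𝕜] F × F)) rfl ?_ rfl
  ext x : 1
  refine WithLp.ofLp_injective 2 (Prod.ext ?_ ?_) <;> simp [sq, e]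

end OffDiag

variable {F : Type*} [NormedAddCommGroup F] [InnerProductSpace ℂ F] [CompleteSpace F]

theorem norm_le_sq_of_mem_spectrum_comp (A B : F →L[ℂ] F) {w : ℝ} (hw0 : 0 ≤ w)
    (hw : ∀ f g, ‖⟪A g, f⟫_ℂ‖ + ‖⟪B f, g⟫_ℂ‖ ≤ w * (‖f‖ * ‖g‖)) {k : ℂ}
    (hk : k ∈ spectrum ℂ (A ∘L B)) : ‖k‖ ≤ (w / 2) ^ 2 := by
  obtain ⟨m, hm, rfl⟩ : k ∈ (· ^ 2) '' spectrum ℂ (offDiag A B) := by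
    rw [← spectrum.map_pow_of_pos _ two_pos]
    exact spectrum_comp_subset_spectrum_offDiag_sq A B hk
  rw [norm_pow]
  exact pow_le_pow_left₀ (norm_nonneg m)
    (norm_le_of_mem_spectrum _ (norm_inner_offDiag_self_le A B hw0 hw) hm) 2

theorem two_mul_sqrt_spectralRadius_comp_le (A B : F →L[ℂ] F) {w : ℝ} (hw0 : 0 ≤ w)
    (hw : ∀ f g, ‖⟪A g, f⟫_ℂ‖ + ‖⟪B f, g⟫_ℂ‖ ≤ w * (‖f‖ * ‖g‖)) :
    2 * √(spectralRadius ℂ (A ∘L B)).toReal ≤ w := by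
  have hρ : spectralRadius ℂ (A ∘L B) ≤ ENNReal.ofReal ((w / 2) ^ 2) :=
    iSup₂_le fun k hk => by
      rw [← ENNReal.ofReal_coe_nnreal, coe_nnnorm]
      exact ENNReal.ofReal_le_ofReal (norm_le_sq_of_mem_spectrum_comp A B hw0 hw hk)
  have := Real.sqrt_le_sqrt (ENNReal.toReal_le_of_le_ofReal (by positivity) hρ)
  rw [Real.sqrt_sq (by positivity)] at this
  linarith

end ContinuousLinearMap

theorem Complex.norm_le_of_forall_rat_re_exp_mul_le {z : ℂ} {r : ℝ}
    (h : ∀ q : ℚ, (exp ((q : ℝ) * I) * z).re ≤ r) : ‖z‖ ≤ r := by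
  have hclosed : IsClosed {t : ℝ | (exp (t * I) * z).re ≤ r} :=
    isClosed_le (by fun_prop : Continuous fun t : ℝ => (exp (t * I) * z).re) continuous_const
  have hall : ∀ t : ℝ, (exp (t * I) * z).re ≤ r := fun t =>
    hclosed.closure_subset_iff.2 (Set.range_subset_iff.2 h) (Rat.denseRange_cast t)
  have hrot : exp ((-z.arg : ℝ) * I) * z = ‖z‖ := by
    calc _ = exp ((-z.arg : ℝ) * I) * (‖z‖ * exp (z.arg * I)) := by rw [norm_mul_exp_arg_mul_I]
      _ = ‖z‖ := by rw [mul_left_comm, ← exp_add, ofReal_neg, neg_mul, neg_add_cancel, exp_zero,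
        mul_one]
  simpa only [hrot, ofReal_re] using hall (-z.arg)

section L2

variable {X : Type*} [MeasurableSpace X] {μ : Measure X}

def absLp (φ : Lp ℂ 2 μ) : Lp ℂ 2 μ :=
  (Complex.isometry_ofReal.lipschitz.comp lipschitzWith_one_norm).compLp (by simp) φ

def reLp (φ : Lp ℂ 2 μ) : Lp ℂ 2 μ := (Complex.ofRealCLM ∘L Complex.reCLM).compLp φ

def imLp (φ : Lp ℂ 2 μ) : Lp ℂ 2 μ := (Complex.ofRealCLM ∘L Complex.imCLM).compLp φ

theorem coeFn_absLp (φ : Lp ℂ 2 μ) : absLp φ =ᵐ[μ] fun x => (‖φ x‖ : ℂ) :=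
  LipschitzWith.coeFn_compLp _ _ _

theorem coeFn_reLp (φ : Lp ℂ 2 μ) : reLp φ =ᵐ[μ] fun x => ((φ x).re : ℂ) :=
  ContinuousLinearMap.coeFn_compLp _ _

theorem coeFn_imLp (φ : Lp ℂ 2 μ) : imLp φ =ᵐ[μ] fun x => ((φ x).im : ℂ) :=
  ContinuousLinearMap.coeFn_compLp _ _

theorem norm_absLp (φ : Lp ℂ 2 μ) : ‖absLp φ‖ = ‖φ‖ := by
  rw [Lp.norm_def, Lp.norm_def, eLpNorm_congr_ae (coeFn_absLp φ)]
  exact congrArg _ (eLpNorm_congr_norm_ae (.of_forall fun x => by simp))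

theorem absLp_smul {c : ℂ} (hc : ‖c‖ = 1) (φ : Lp ℂ 2 μ) : absLp (c • φ) = absLp φ := by
  refine Lp.ext ?_
  filter_upwards [coeFn_absLp (c • φ), coeFn_absLp φ, Lp.coeFn_smul c φ] with x h₁ h₂ h₃
  simp [h₁, h₂, h₃, hc]

theorem reLp_add_I_smul_imLp (φ : Lp ℂ 2 μ) : reLp φ + Complex.I • imLp φ = φ := by
  refine Lp.ext ?_
  filter_upwards [coeFn_reLp φ, coeFn_imLp φ, Lp.coeFn_add (reLp φ) (Complex.I • imLp φ),
    Lp.coeFn_smul Complex.I (imLp φ)] with x h₁ h₂ h₃ h₄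
  rw [h₃, Pi.add_apply, h₄, Pi.smul_apply, h₁, h₂, smul_eq_mul, mul_comm, Complex.re_add_im]

end L2

namespace IsPositiveOp

variable {X : Type*} [MeasurableSpace X] {μ : Measure X} {A B : Lp ℂ 2 μ →L[ℂ] Lp ℂ 2 μ}

theorem mono (hA : IsPositiveOp μ A) {f g : Lp ℂ 2 μ} (h : ∀ᵐ x ∂μ, f x ≤ g x) :
    ∀ᵐ x ∂μ, A f x ≤ A g x := by
  have hgf : ∀ᵐ x ∂μ, 0 ≤ (g - f : Lp ℂ 2 μ) x := by
    filter_upwards [h, Lp.coeFn_sub g f] with x hx hsub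
    rw [hsub, Pi.sub_apply]
    exact sub_nonneg.2 hx
  filter_upwards [hA _ hgf, Lp.coeFn_sub (A g) (A f)] with x hx hsub
  rw [map_sub, hsub, Pi.sub_apply] at hx
  exact sub_nonneg.1 hx

theorem re_apply_le (hA : IsPositiveOp μ A) (φ : Lp ℂ 2 μ) :
    ∀ᵐ x ∂μ, (A φ x).re ≤ (A (absLp φ) x).re := by
  have hre : ∀ᵐ x ∂μ, reLp φ x ≤ absLp φ x := by
    filter_upwards [coeFn_reLp φ, coeFn_absLp φ] with x h₁ h₂
    rw [h₁, h₂, Complex.real_le_real]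
    exact Complex.re_le_norm _
  have him : ∀ᵐ x ∂μ, imLp φ x ≤ absLp φ x := by
    filter_upwards [coeFn_imLp φ, coeFn_absLp φ] with x h₁ h₂
    rw [h₁, h₂, Complex.real_le_real]
    exact Complex.im_le_norm _
  have habs : ∀ᵐ x ∂μ, 0 ≤ absLp φ x := by
    filter_upwards [coeFn_absLp φ] with x h
    rw [h, Complex.zero_le_real]
    exact norm_nonneg _
  have hsplit : A φ = A (reLp φ) + Complex.I • A (imLp φ) := by
    rw [← map_smul, ← map_add, reLp_add_I_smul_imLp]
  -- `A (imLp φ) ≤ A (absLp φ)` forces `A (imLp φ)` to be real, so it drops out of the real part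
  filter_upwards [hA.mono hre, hA.mono him, hA _ habs,
    Lp.coeFn_add (A (reLp φ)) (Complex.I • A (imLp φ)), Lp.coeFn_smul Complex.I (A (imLp φ))]
    with x hu hv h₀ h₁ h₂
  rw [hsplit, h₁, Pi.add_apply, h₂, Pi.smul_apply, smul_eq_mul, Complex.add_re, Complex.I_mul_re]
  rw [Complex.le_def] at hu hv h₀
  linarith [hu.1, hv.2, h₀.2, Complex.zero_im]

theorem norm_apply_le (hA : IsPositiveOp μ A) (φ : Lp ℂ 2 μ) :
    ∀ᵐ x ∂μ, ‖A φ x‖ ≤ (A (absLp φ) x).re := by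
  have hrot (q : ℚ) :
      ∀ᵐ x ∂μ, (Complex.exp ((q : ℝ) * Complex.I) * A φ x).re ≤ (A (absLp φ) x).re := by
    have hθ := Complex.norm_exp_ofReal_mul_I q
    filter_upwards [hA.re_apply_le (Complex.exp ((q : ℝ) * Complex.I) • φ),
      Lp.coeFn_smul (Complex.exp ((q : ℝ) * Complex.I)) (A φ)] with x h₁ h₂
    rwa [absLp_smul hθ, map_smul, h₂] at h₁
  filter_upwards [ae_all_iff.2 hrot] with x hx
  exact Complex.norm_le_of_forall_rat_re_exp_mul_le hx

theorem norm_inner_le (hA : IsPositiveOp μ A) (φ ψ : Lp ℂ 2 μ) :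
    ‖⟪A φ, ψ⟫_ℂ‖ ≤ (⟪A (absLp φ), absLp ψ⟫_ℂ).re := by
  have hint := L2.integrable_inner (𝕜 := ℂ) (A (absLp φ)) (absLp ψ)
  rw [L2.inner_def, L2.inner_def]
  refine (norm_integral_le_integral_norm _).trans <| (integral_mono_ae
    (L2.integrable_inner _ _).norm hint.re ?_).trans_eq (integral_re hint)
  filter_upwards [hA.norm_apply_le φ, coeFn_absLp ψ] with x h₁ h₂
  simpa [h₂] using mul_le_mul_of_nonneg_left h₁ (norm_nonneg (ψ x))

theorem norm_inner_add_norm_inner_le (hA : IsPositiveOp μ A) (hB : IsPositiveOp μ B)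
    (f g : Lp ℂ 2 μ) :
    ‖⟪A g, f⟫_ℂ‖ + ‖⟪B f, g⟫_ℂ‖ ≤ ‖A + ContinuousLinearMap.adjoint B‖ * (‖f‖ * ‖g‖) :=
  calc _ ≤ (⟪A (absLp g), absLp f⟫_ℂ).re + (⟪B (absLp f), absLp g⟫_ℂ).re :=
        add_le_add (hA.norm_inner_le g f) (hB.norm_inner_le f g)
    _ = (⟪(A + ContinuousLinearMap.adjoint B) (absLp g), absLp f⟫_ℂ).re := by
        rw [add_apply, inner_add_left, Complex.add_re,
          ContinuousLinearMap.adjoint_inner_left, ← inner_conj_symm (B _), Complex.conj_re]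
    _ ≤ ‖(A + ContinuousLinearMap.adjoint B) (absLp g)‖ * ‖absLp f‖ :=
        (Complex.re_le_norm _).trans (norm_inner_le_norm _ _)
    _ ≤ ‖A + ContinuousLinearMap.adjoint B‖ * ‖absLp g‖ * ‖absLp f‖ := by
        gcongr
        exact ContinuousLinearMap.le_opNorm _ _
    _ = _ := by rw [norm_absLp, norm_absLp, mul_comm ‖f‖, mul_assoc]

end IsPositiveOp

theorem norm_add_adjoint_ge_two_sqrt_general
    {X : Type*} [MeasurableSpace X] (μ : Measure X)
    (A B : Lp ℂ 2 μ →L[ℂ] Lp ℂ 2 μ) (hA : IsPositiveOp μ A) (hB : IsPositiveOp μ B) :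
    2 * Real.sqrt ((spectralRadius ℂ (A.comp B)).toReal)
      ≤ ‖A + ContinuousLinearMap.adjoint B‖ :=
  ContinuousLinearMap.two_mul_sqrt_spectralRadius_comp_le A B (norm_nonneg _)
    (hA.norm_inner_add_norm_inner_le hB)

theorem norm_add_adjoint_ge_two_sqrt
    {X : Type*} [MeasurableSpace X] (μ : Measure X) [SigmaFinite μ]
    (A B : Lp ℂ 2 μ →L[ℂ] Lp ℂ 2 μ) (hA : IsPositiveOp μ A) (hB : IsPositiveOp μ B) :
    2 * Real.sqrt ((spectralRadius ℂ (A.comp B)).toReal)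
      ≤ ‖A + ContinuousLinearMap.adjoint B‖ :=
  norm_add_adjoint_ge_two_sqrt_general μ A B hA hB
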